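/- Let U ⊆ ℝ² be an open set and f : U → ℝ a smooth function whose partial derivatives f_x and f_y are nowhere zero on U. Set H = f_{xy}/(f_x·f_y), ∂₁ = −(1/f_x)·∂/∂x, ∂₂ = −(1/f_y)·∂/∂y. If a smooth function σ₂ : U → ℝ satisfies ∂₁(σ₂) = H on U, then ∂₁(∂₂(∂₂(σ₂))) = 2H·∂₂(∂₂(σ₂)) + (∂₂(H) − H²)·∂₂(σ₂) + ∂₂(∂₂(H)) − 3H·∂₂(H) + H³ on U. -/

import Mathlib

/-- Partial derivative with respect to the first coordinate. -/
noncomputable def pdx (f : ℝ × ℝ → ℝ) : ℝ × ℝ → ℝ :=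
  fun q => deriv (fun t => f (t, q.2)) q.1

/-- Partial derivative with respect to the second coordinate. -/
noncomputable def pdy (f : ℝ × ℝ → ℝ) : ℝ × ℝ → ℝ :=
  fun q => deriv (fun t => f (q.1, t)) q.2

/-- The vector field `∂₁ = -(1/f_x)·∂/∂x` applied to a function `p`. -/
noncomputable def D1 (f p : ℝ × ℝ → ℝ) : ℝ × ℝ → ℝ :=
  fun q => -(pdx p q) / pdx f q

/-- The vector field `∂₂ = -(1/f_y)·∂/∂y` applied to a function `p`. -/
noncomputable def D2 (f p : ℝ × ℝ → ℝ) : ℝ × ℝ → ℝ :=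
  fun q => -(pdy p q) / pdy f q

/-- `H = f_{xy}/(f_x·f_y)`. -/
noncomputable def Hf (f : ℝ × ℝ → ℝ) : ℝ × ℝ → ℝ :=
  fun q => pdy (pdx f) q / (pdx f q * pdy f q)

/-- A differential 1-form `a dx + c dy` on (an open subset of) `ℝ²`, recorded by its
pair of coefficient functions `(a, c)`. -/
abbrev Form1 : Type := (ℝ × ℝ → ℝ) × (ℝ × ℝ → ℝ)

/-- The coefficient of `dx ∧ dy` in the wedge product of two 1-forms. -/
noncomputable def wedge (α β : Form1) : ℝ × ℝ → ℝ :=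
  fun q => α.1 q * β.2 q - α.2 q * β.1 q

/-- The coefficient of `dx ∧ dy` in the exterior derivative of a 1-form. -/
noncomputable def extd (α : Form1) : ℝ × ℝ → ℝ :=
  fun q => pdx α.2 q - pdy α.1 q

/-- Multiplication of a 1-form by a function. -/
noncomputable def smul1 (s : ℝ × ℝ → ℝ) (α : Form1) : Form1 :=
  (fun q => s q * α.1 q, fun q => s q * α.2 q)

/-- The coordinate 1-form `dx`. -/
noncomputable def dX : Form1 := (fun _ => 1, fun _ => 0)

/-- The coordinate 1-form `dy`. -/
noncomputable def dY : Form1 := (fun _ => 0, fun _ => 1)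

section infra
variable {p r : ℝ × ℝ → ℝ} {q : ℝ × ℝ} {U : Set (ℝ × ℝ)}

lemma sliceY_diff (hp : DifferentiableAt ℝ p q) :
    DifferentiableAt ℝ (fun t => p (q.1, t)) q.2 := by
  have h : DifferentiableAt ℝ (fun t : ℝ => ((q.1, t) : ℝ × ℝ)) q.2 :=
    (differentiableAt_const _).prodMk differentiableAt_id
  have := DifferentiableAt.comp (𝕜 := ℝ) q.2 (by simpa using hp) h
  exact this

lemma sliceX_diff (hp : DifferentiableAt ℝ p q) :
    DifferentiableAt ℝ (fun t => p (t, q.2)) q.1 := by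
  have h : DifferentiableAt ℝ (fun t : ℝ => ((t, q.2) : ℝ × ℝ)) q.1 :=
    differentiableAt_id.prodMk (differentiableAt_const _)
  have := DifferentiableAt.comp (𝕜 := ℝ) q.1 (by simpa using hp) h
  exact this

lemma pdy_neg : pdy (fun x => -p x) q = -pdy p q := by
  simp only [pdy]; exact deriv.neg

lemma pdx_neg : pdx (fun x => -p x) q = -pdx p q := by
  simp only [pdx]; exact deriv.neg

lemma pdy_add (hp : DifferentiableAt ℝ p q) (hr : DifferentiableAt ℝ r q) :
    pdy (fun x => p x + r x) q = pdy p q + pdy r q := by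
  simp only [pdy]; exact deriv_add (sliceY_diff hp) (sliceY_diff hr)

lemma pdx_add (hp : DifferentiableAt ℝ p q) (hr : DifferentiableAt ℝ r q) :
    pdx (fun x => p x + r x) q = pdx p q + pdx r q := by
  simp only [pdx]; exact deriv_add (sliceX_diff hp) (sliceX_diff hr)

lemma pdy_sub (hp : DifferentiableAt ℝ p q) (hr : DifferentiableAt ℝ r q) :
    pdy (fun x => p x - r x) q = pdy p q - pdy r q := by
  simp only [pdy]; exact deriv_sub (sliceY_diff hp) (sliceY_diff hr)

lemma pdx_sub (hp : DifferentiableAt ℝ p q) (hr : DifferentiableAt ℝ r q) :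
    pdx (fun x => p x - r x) q = pdx p q - pdx r q := by
  simp only [pdx]; exact deriv_sub (sliceX_diff hp) (sliceX_diff hr)

lemma pdy_mul (hp : DifferentiableAt ℝ p q) (hr : DifferentiableAt ℝ r q) :
    pdy (fun x => p x * r x) q = pdy p q * r q + p q * pdy r q := by
  have := deriv_fun_mul (sliceY_diff hp) (sliceY_diff hr)
  simpa [pdy] using this

lemma pdx_mul (hp : DifferentiableAt ℝ p q) (hr : DifferentiableAt ℝ r q) :
    pdx (fun x => p x * r x) q = pdx p q * r q + p q * pdx r q := by
  have := deriv_fun_mul (sliceX_diff hp) (sliceX_diff hr)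
  simpa [pdx] using this

lemma pdy_div (hp : DifferentiableAt ℝ p q) (hr : DifferentiableAt ℝ r q) (h0 : r q ≠ 0) :
    pdy (fun x => p x / r x) q = (pdy p q * r q - p q * pdy r q) / (r q)^2 := by
  have := deriv_fun_div (sliceY_diff hp) (sliceY_diff hr) (by simpa using h0)
  simpa [pdy] using this

lemma pdx_div (hp : DifferentiableAt ℝ p q) (hr : DifferentiableAt ℝ r q) (h0 : r q ≠ 0) :
    pdx (fun x => p x / r x) q = (pdx p q * r q - p q * pdx r q) / (r q)^2 := by
  have := deriv_fun_div (sliceX_diff hp) (sliceX_diff hr) (by simpa using h0)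
  simpa [pdx] using this

lemma pdy_congr (hU : IsOpen U) (hq : q ∈ U) (h : ∀ x ∈ U, p x = r x) :
    pdy p q = pdy r q := by
  have hc : Continuous (fun t : ℝ => ((q.1, t) : ℝ × ℝ)) := by continuity
  have hmem : ∀ᶠ t in nhds q.2, ((q.1, t) : ℝ × ℝ) ∈ U := by
    have := (hc.continuousAt (x := q.2)).preimage_mem_nhds (hU.mem_nhds (by simpa using hq))
    exact this
  have hev : (fun t => p (q.1, t)) =ᶠ[nhds q.2] (fun t => r (q.1, t)) :=
    hmem.mono fun t ht => h _ ht
  simpa [pdy] using hev.deriv_eq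

lemma pdx_congr (hU : IsOpen U) (hq : q ∈ U) (h : ∀ x ∈ U, p x = r x) :
    pdx p q = pdx r q := by
  have hc : Continuous (fun t : ℝ => ((t, q.2) : ℝ × ℝ)) := by continuity
  have hmem : ∀ᶠ t in nhds q.1, ((t, q.2) : ℝ × ℝ) ∈ U := by
    have := (hc.continuousAt (x := q.1)).preimage_mem_nhds (hU.mem_nhds (by simpa using hq))
    exact this
  have hev : (fun t => p (t, q.2)) =ᶠ[nhds q.1] (fun t => r (t, q.2)) :=
    hmem.mono fun t ht => h _ ht
  simpa [pdx] using hev.deriv_eq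

lemma dAt {F : Type*} [NormedAddCommGroup F] [NormedSpace ℝ F] {p : ℝ × ℝ → F}
    (hU : IsOpen U) (hp : ContDiffOn ℝ (⊤:ℕ∞) p U) (hq : q ∈ U) :
    DifferentiableAt ℝ p q :=
  (hp.contDiffAt (hU.mem_nhds hq)).differentiableAt (by simp)

lemma pdy_eq_fderiv (hp : DifferentiableAt ℝ p q) :
    pdy p q = fderiv ℝ p q (0, 1) := by
  have h1 : HasDerivAt (fun t : ℝ => ((q.1, t) : ℝ × ℝ)) ((0 : ℝ), (1 : ℝ)) q.2 :=
    (hasDerivAt_const q.2 q.1).prodMk (hasDerivAt_id q.2)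
  have h2 : HasFDerivAt p (fderiv ℝ p q) (q.1, q.2) := by simpa using hp.hasFDerivAt
  have := h2.comp_hasDerivAt q.2 h1
  simpa [pdy, Function.comp_def] using this.deriv

lemma pdx_eq_fderiv (hp : DifferentiableAt ℝ p q) :
    pdx p q = fderiv ℝ p q (1, 0) := by
  have h1 : HasDerivAt (fun t : ℝ => ((t, q.2) : ℝ × ℝ)) ((1 : ℝ), (0 : ℝ)) q.1 :=
    (hasDerivAt_id q.1).prodMk (hasDerivAt_const q.1 q.2)
  have h2 : HasFDerivAt p (fderiv ℝ p q) (q.1, q.2) := by simpa using hp.hasFDerivAt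
  have := h2.comp_hasDerivAt q.1 h1
  simpa [pdx, Function.comp_def] using this.deriv

lemma contDiffOn_pdy (hU : IsOpen U) (hp : ContDiffOn ℝ (⊤:ℕ∞) p U) :
    ContDiffOn ℝ (⊤:ℕ∞) (pdy p) U := by
  have hfd : ContDiffOn ℝ (⊤:ℕ∞) (fderiv ℝ p) U := hp.fderiv_of_isOpen hU (by simp)
  have h2 : ContDiffOn ℝ (⊤:ℕ∞) (fun x => fderiv ℝ p x (0, 1)) U :=
    hfd.clm_apply contDiffOn_const
  exact h2.congr fun x hx => pdy_eq_fderiv (dAt hU hp hx)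

lemma contDiffOn_pdx (hU : IsOpen U) (hp : ContDiffOn ℝ (⊤:ℕ∞) p U) :
    ContDiffOn ℝ (⊤:ℕ∞) (pdx p) U := by
  have hfd : ContDiffOn ℝ (⊤:ℕ∞) (fderiv ℝ p) U := hp.fderiv_of_isOpen hU (by simp)
  have h2 : ContDiffOn ℝ (⊤:ℕ∞) (fun x => fderiv ℝ p x (1, 0)) U :=
    hfd.clm_apply contDiffOn_const
  exact h2.congr fun x hx => pdx_eq_fderiv (dAt hU hp hx)

lemma pdy_pdx_comm (hU : IsOpen U) (hp : ContDiffOn ℝ (⊤:ℕ∞) p U) (hq : q ∈ U) :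
    pdy (pdx p) q = pdx (pdy p) q := by
  have hF : ContDiffOn ℝ (⊤:ℕ∞) (fderiv ℝ p) U := hp.fderiv_of_isOpen hU (by simp)
  have hFd : DifferentiableAt ℝ (fderiv ℝ p) q := dAt hU hF hq
  have hev : ∀ᶠ y in nhds q, HasFDerivAt p (fderiv ℝ p y) y := by
    filter_upwards [hU.mem_nhds hq] with y hy
    exact (dAt hU hp hy).hasFDerivAt
  have hsymm := second_derivative_symmetric_of_eventually hev hFd.hasFDerivAt
    ((0:ℝ), (1:ℝ)) ((1:ℝ), (0:ℝ))
  have e1 : pdy (pdx p) q = fderiv ℝ (fderiv ℝ p) q (0, 1) (1, 0) := by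
    have hc : pdy (pdx p) q = pdy (fun x => fderiv ℝ p x (1, 0)) q :=
      pdy_congr hU hq fun x hx => pdx_eq_fderiv (dAt hU hp hx)
    have hd : DifferentiableAt ℝ (fun x => fderiv ℝ p x (1, 0)) q :=
      hFd.clm_apply (differentiableAt_const _)
    rw [hc, pdy_eq_fderiv hd, fderiv_clm_apply hFd (differentiableAt_const _)]
    simp
  have e2 : pdx (pdy p) q = fderiv ℝ (fderiv ℝ p) q (1, 0) (0, 1) := by
    have hc : pdx (pdy p) q = pdx (fun x => fderiv ℝ p x (0, 1)) q :=
      pdx_congr hU hq fun x hx => pdy_eq_fderiv (dAt hU hp hx)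
    have hd : DifferentiableAt ℝ (fun x => fderiv ℝ p x (0, 1)) q :=
      hFd.clm_apply (differentiableAt_const _)
    rw [hc, pdx_eq_fderiv hd, fderiv_clm_apply hFd (differentiableAt_const _)]
    simp
  rw [e1, e2, hsymm]

end infra

set_option maxHeartbeats 1000000 in
/-- second prolongation of the Samuelson equation `∂₁σ₂ = H`:
`∂₁∂₂∂₂σ₂ = 2H∂₂∂₂σ₂ + (∂₂H - H²)∂₂σ₂ + ∂₂∂₂H - 3H∂₂H + H³` on `U`. -/
theorem second_prolongation_sigma2_122
    (U : Set (ℝ × ℝ)) (hU : IsOpen U)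
    (f : ℝ × ℝ → ℝ) (hf : ContDiffOn ℝ (⊤ : ℕ∞) f U)
    (hfx : ∀ q ∈ U, pdx f q ≠ 0) (hfy : ∀ q ∈ U, pdy f q ≠ 0)
    (σ₂ : ℝ × ℝ → ℝ) (hσ₂ : ContDiffOn ℝ (⊤ : ℕ∞) σ₂ U)
    (heq : ∀ q ∈ U, D1 f σ₂ q = Hf f q) :
    ∀ q ∈ U, D1 f (D2 f (D2 f σ₂)) q =
      2 * Hf f q * D2 f (D2 f σ₂) q
        + (D2 f (Hf f) q - Hf f q ^ 2) * D2 f σ₂ q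
        + D2 f (D2 f (Hf f)) q - 3 * Hf f q * D2 f (Hf f) q + Hf f q ^ 3 := by
  set a := pdx f with ha_def
  set b := pdy f with hb_def
  set h := pdy a with hh_def
  set h1 := pdy h with hh1_def
  set h2 := pdy h1 with hh2_def
  set b1 := pdy b with hb1_def
  set b2 := pdy b1 with hb2_def
  set s := pdy σ₂ with hs_def
  set s1 := pdy s with hs1_def
  have cfa : ContDiffOn ℝ (⊤:ℕ∞) a U := contDiffOn_pdx hU hf
  have cfb : ContDiffOn ℝ (⊤:ℕ∞) b U := contDiffOn_pdy hU hf
  have cfh : ContDiffOn ℝ (⊤:ℕ∞) h U := contDiffOn_pdy hU cfa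
  have cfh1 : ContDiffOn ℝ (⊤:ℕ∞) h1 U := contDiffOn_pdy hU cfh
  have cfb1 : ContDiffOn ℝ (⊤:ℕ∞) b1 U := contDiffOn_pdy hU cfb
  have cfs : ContDiffOn ℝ (⊤:ℕ∞) s U := contDiffOn_pdy hU hσ₂
  have cfs1 : ContDiffOn ℝ (⊤:ℕ∞) s1 U := contDiffOn_pdy hU cfs
  have E1 : ∀ r ∈ U, pdx σ₂ r = -h r / b r := by
    intro r hr
    have ha0 := hfx r hr; have hb0 := hfy r hr
    have e := heq r hr
    simp only [D1, Hf] at e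
    rw [← ha_def, ← hb_def, ← hh_def] at e
    field_simp at e
    rw [eq_div_iff hb0]; linarith
  have Xb : ∀ r ∈ U, pdx b r = h r := fun r hr => (pdy_pdx_comm hU hf hr).symm
  have Xs : ∀ r ∈ U, pdx s r = (h r * b1 r - h1 r * b r) / (b r * b r) := by
    intro r hr
    have ha0 := hfx r hr; have hb0 := hfy r hr
    have dh : DifferentiableAt ℝ h r := dAt hU cfh hr
    have db : DifferentiableAt ℝ b r := dAt hU cfb hr
    have c1 : pdx s r = pdy (pdx σ₂) r := (pdy_pdx_comm hU hσ₂ hr).symm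
    have c2 : pdy (pdx σ₂) r = pdy (fun x => -h x / b x) r :=
      pdy_congr hU hr fun x hx => E1 x hx
    have c3 : pdy (fun x => -h x / b x) r
        = ((-(h1 r)) * b r - (-(h r)) * b1 r) / (b r)^2 := by
      have base := pdy_div (p := fun x => -h x) (r := b) (q := r) dh.neg db hb0
      beta_reduce at base
      rw [pdy_neg] at base
      exact base
    rw [c1, c2, c3]
    field_simp
    ring
  have vG : ∀ r ∈ U, D2 f (D2 f σ₂) r
      = (s1 r * b r - s r * b1 r) / (b r * b r * b r) := by
    intro r hr
    have hb0 := hfy r hr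
    have ds : DifferentiableAt ℝ s r := dAt hU cfs hr
    have db : DifferentiableAt ℝ b r := dAt hU cfb hr
    have y1 : pdy (D2 f σ₂) r = ((-(s1 r)) * b r - (-(s r)) * b1 r) / (b r)^2 := by
      have base := pdy_div (p := fun x => -s x) (r := b) (q := r) ds.neg db hb0
      beta_reduce at base
      rw [pdy_neg] at base
      exact base
    calc D2 f (D2 f σ₂) r = -(pdy (D2 f σ₂) r) / b r := rfl
      _ = _ := by rw [y1]; field_simp; ring
  have vE : ∀ r ∈ U, D2 f (Hf f) r
      = -(h1 r * a r * b r - h r * h r * b r - h r * a r * b1 r)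
        / (a r * a r * b r * b r * b r) := by
    intro r hr
    have ha0 := hfx r hr; have hb0 := hfy r hr
    have da : DifferentiableAt ℝ a r := dAt hU cfa hr
    have db : DifferentiableAt ℝ b r := dAt hU cfb hr
    have dh : DifferentiableAt ℝ h r := dAt hU cfh hr
    have y2 : pdy (Hf f) r
        = (h1 r * (a r * b r) - h r * (h r * b r + a r * b1 r)) / (a r * b r)^2 := by
      have base := pdy_div (p := h) (r := fun x => a x * b x) (q := r) dh (da.mul db)
        (mul_ne_zero ha0 hb0)
      beta_reduce at base
      rw [pdy_mul da db] at base
      exact base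
    calc D2 f (Hf f) r = -(pdy (Hf f) r) / b r := rfl
      _ = _ := by rw [y2]; field_simp; ring
  have main : ∀ q ∈ U, D1 f (D2 f (D2 f σ₂)) q =
      2 * Hf f q * D2 f (D2 f σ₂) q
        + (D2 f (Hf f) q - Hf f q ^ 2) * D2 f σ₂ q
        + D2 f (D2 f (Hf f)) q - 3 * Hf f q * D2 f (Hf f) q + Hf f q ^ 3 := by
    intro q hq
    have ha0 := hfx q hq; have hb0 := hfy q hq
    have da : DifferentiableAt ℝ a q := dAt hU cfa hq
    have db : DifferentiableAt ℝ b q := dAt hU cfb hq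
    have dh : DifferentiableAt ℝ h q := dAt hU cfh hq
    have dh1 : DifferentiableAt ℝ h1 q := dAt hU cfh1 hq
    have db1 : DifferentiableAt ℝ b1 q := dAt hU cfb1 hq
    have ds : DifferentiableAt ℝ s q := dAt hU cfs hq
    have ds1 : DifferentiableAt ℝ s1 q := dAt hU cfs1 hq
    have Xb1q : pdx b1 q = h1 q := by
      have c1 : pdx b1 q = pdy (pdx b) q := (pdy_pdx_comm hU cfb hq).symm
      have c2 : pdy (pdx b) q = pdy h q := pdy_congr hU hq Xb
      rw [c1, c2]
    have Xs1q : pdx s1 q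
        = ((h1 q * b1 q + h q * b2 q - (h2 q * b q + h1 q * b1 q)) * (b q * b q)
          - (h q * b1 q - h1 q * b q) * (b1 q * b q + b q * b1 q)) / ((b q * b q))^2 := by
      have c1 : pdx s1 q = pdy (pdx s) q := (pdy_pdx_comm hU cfs hq).symm
      have c2 : pdy (pdx s) q = pdy (fun x => (h x * b1 x - h1 x * b x) / (b x * b x)) q :=
        pdy_congr hU hq Xs
      have base := pdy_div (p := fun x => h x * b1 x - h1 x * b x)
        (r := fun x => b x * b x) (q := q)
        ((dh.fun_mul db1).fun_sub (dh1.fun_mul db)) (db.fun_mul db) (mul_ne_zero hb0 hb0)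
      beta_reduce at base
      rw [pdy_sub (dh.fun_mul db1) (dh1.fun_mul db), pdy_mul dh db1, pdy_mul dh1 db,
        pdy_mul db db] at base
      rw [c1, c2, base]
    have cG : pdx (D2 f (D2 f σ₂)) q
        = pdx (fun x => (s1 x * b x - s x * b1 x) / (b x * b x * b x)) q :=
      pdx_congr hU hq vG
    have baseG := pdx_div (p := fun x => s1 x * b x - s x * b1 x)
      (r := fun x => b x * b x * b x) (q := q)
      ((ds1.fun_mul db).fun_sub (ds.fun_mul db1)) ((db.fun_mul db).fun_mul db)
      (mul_ne_zero (mul_ne_zero hb0 hb0) hb0)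
    beta_reduce at baseG
    rw [pdx_sub (ds1.fun_mul db) (ds.fun_mul db1), pdx_mul ds1 db, pdx_mul ds db1,
      pdx_mul (db.fun_mul db) db, pdx_mul db db] at baseG
    rw [Xb q hq, Xb1q, Xs q hq, Xs1q] at baseG
    have cH2 : pdy (D2 f (Hf f)) q
        = pdy (fun x => -(h1 x * a x * b x - h x * h x * b x - h x * a x * b1 x)
            / (a x * a x * b x * b x * b x)) q := pdy_congr hU hq vE
    have baseH := pdy_div
      (p := fun x => -(h1 x * a x * b x - h x * h x * b x - h x * a x * b1 x))
      (r := fun x => a x * a x * b x * b x * b x) (q := q)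
      (((((dh1.fun_mul da).fun_mul db).fun_sub ((dh.fun_mul dh).fun_mul db)).fun_sub ((dh.fun_mul da).fun_mul db1)).fun_neg)
      ((((da.fun_mul da).fun_mul db).fun_mul db).fun_mul db)
      (mul_ne_zero (mul_ne_zero (mul_ne_zero (mul_ne_zero ha0 ha0) hb0) hb0) hb0)
    beta_reduce at baseH
    rw [pdy_neg,
      pdy_sub (((dh1.fun_mul da).fun_mul db).fun_sub ((dh.fun_mul dh).fun_mul db)) ((dh.fun_mul da).fun_mul db1),
      pdy_sub ((dh1.fun_mul da).fun_mul db) ((dh.fun_mul dh).fun_mul db),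
      pdy_mul (dh1.fun_mul da) db, pdy_mul dh1 da, pdy_mul (dh.fun_mul dh) db, pdy_mul dh dh,
      pdy_mul (dh.fun_mul da) db1, pdy_mul dh da,
      pdy_mul (((da.fun_mul da).fun_mul db).fun_mul db) db, pdy_mul ((da.fun_mul da).fun_mul db) db,
      pdy_mul (da.fun_mul da) db, pdy_mul da da] at baseH
    rw [← hh_def, ← hh1_def, ← hh2_def, ← hb1_def, ← hb2_def] at baseH
    rw [show D1 f (D2 f (D2 f σ₂)) q = -(pdx (D2 f (D2 f σ₂)) q) / a q from rfl]
    rw [show D2 f (D2 f (Hf f)) q = -(pdy (D2 f (Hf f)) q) / b q from rfl]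
    rw [show Hf f q = h q / (a q * b q) from rfl,
      show D2 f σ₂ q = -(s q) / b q from rfl]
    clear_value a b h h1 h2 b1 b2 s s1
    rw [cG, baseG, vG q hq, vE q hq, cH2, baseH]
    field_simp
    ring
  exact main
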